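/- Let a ≥ 1 and let U be an open subgroup of finite index of the topological group (ℝˣ)ᵃ. Then there exist a natural number e with 0 ≤ e ≤ a and a continuous group homomorphism f : (ℂˣ)ᵉ × (ℝˣ)^{a−e} → (ℝˣ)ᵃ whose image is exactly U. -/

import Mathlib

/-!
A subgroup of finite index `n` contains every `n`-th power, hence the whole positive orthant
`(ℝ_{>0})ᵃ`. So `U` is determined by the sign patterns of its elements, which form an
`𝔽₂`-subspace `W ⊆ 𝔽₂ᵃ` of some dimension `d`. With `e = a - d` and a linear isomorphism
`φ : 𝔽₂ᵈ ≃ W`, send `(z, r)` to `(‖z₁‖, …, ‖z_e‖, |r₁|, …, |r_d|)` with signs flipped according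
to `φ (sign r)`: its image is the positive orthant times the sign vectors in `W`, that is, `U`.
-/

open Module

noncomputable section

section NormUnits

variable {𝕜 : Type*} [NormedDivisionRing 𝕜]

def normUnits : 𝕜ˣ →* ℝˣ := Units.map (normHom : 𝕜 →*₀ ℝ)

@[simp]
lemma coe_normUnits (x : 𝕜ˣ) : (normUnits x : ℝ) = ‖(x : 𝕜)‖ := rfl

lemma normUnits_pos (x : 𝕜ˣ) : 0 < (normUnits x : ℝ) := norm_pos_iff.2 x.ne_zero

lemma continuous_normUnits : Continuous (normUnits : 𝕜ˣ →* ℝˣ) :=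
  Continuous.units_map _ continuous_norm

end NormUnits

lemma normUnits_of_pos {x : ℝˣ} (hx : 0 < (x : ℝ)) : normUnits x = x :=
  Units.ext (abs_of_pos hx)

lemma normUnits_map_ofReal {𝕜 : Type*} [RCLike 𝕜] {x : ℝˣ} (hx : 0 < (x : ℝ)) :
    normUnits (Units.map (algebraMap ℝ 𝕜 : ℝ →* 𝕜) x) = x :=
  Units.ext (by simp [abs_of_pos hx])

section Signs

def signBit (x : ℝˣ) : ZMod 2 := if 0 < (x : ℝ) then 0 else 1

def ofBit (b : ZMod 2) : ℝˣ := if b = 0 then 1 else -1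

lemma signBit_of_pos {x : ℝˣ} (hx : 0 < (x : ℝ)) : signBit x = 0 := if_pos hx

lemma signBit_of_neg {x : ℝˣ} (hx : (x : ℝ) < 0) : signBit x = 1 := if_neg hx.not_gt

lemma signBit_mul (x y : ℝˣ) : signBit (x * y) = signBit x + signBit y := by
  rcases lt_or_gt_of_ne x.ne_zero with hx | hx <;> rcases lt_or_gt_of_ne y.ne_zero with hy | hy <;>
    simp [signBit, hx, hy, hx.not_gt, hy.not_gt, mul_pos_iff, CharTwo.add_self_eq_zero]

lemma continuous_signBit : Continuous signBit := by
  refine ((IsLocallyConstant.iff_eventually_eq _).2 fun x => ?_).continuous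
  rcases lt_or_gt_of_ne x.ne_zero with hx | hx
  · filter_upwards [(isOpen_Iio.preimage Units.continuous_val).mem_nhds hx] with y hy
    rw [signBit_of_neg hx, signBit_of_neg hy]
  · filter_upwards [(isOpen_Ioi.preimage Units.continuous_val).mem_nhds hx] with y hy
    rw [signBit_of_pos hx, signBit_of_pos hy]

lemma ZMod.eq_zero_or_eq_one_of_two (b : ZMod 2) : b = 0 ∨ b = 1 := by
  revert b; decide

lemma ofBit_add (b c : ZMod 2) : ofBit (b + c) = ofBit b * ofBit c := by
  rcases b.eq_zero_or_eq_one_of_two with rfl | rfl <;>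
    rcases c.eq_zero_or_eq_one_of_two with rfl | rfl <;> simp [ofBit, CharTwo.add_self_eq_zero]

lemma signBit_ofBit (b : ZMod 2) : signBit (ofBit b) = b := by
  rcases b.eq_zero_or_eq_one_of_two with rfl | rfl <;> simp [ofBit, signBit]

lemma normUnits_ofBit (b : ZMod 2) : normUnits (ofBit b) = 1 := by
  rcases b.eq_zero_or_eq_one_of_two with rfl | rfl <;> ext <;> simp [ofBit]

lemma ofBit_signBit_mul_normUnits (x : ℝˣ) : ofBit (signBit x) * normUnits x = x := by
  ext
  rcases lt_or_gt_of_ne x.ne_zero with hx | hx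
  · simp [signBit_of_neg hx, ofBit, abs_of_neg hx]
  · simp [signBit_of_pos hx, ofBit, abs_of_pos hx]

end Signs

section SignVectors

variable {ι κ : Type*}

def signBits (u : ι → ℝˣ) : ι → ZMod 2 := fun j => signBit (u j)

def ofBits (w : ι → ZMod 2) : ι → ℝˣ := fun j => ofBit (w j)

lemma signBits_mul (u v : ι → ℝˣ) : signBits (u * v) = signBits u + signBits v :=
  funext fun j => signBit_mul (u j) (v j)

lemma signBits_of_pos {u : ι → ℝˣ} (hu : ∀ j, 0 < (u j : ℝ)) : signBits u = 0 :=
  funext fun j => signBit_of_pos (hu j)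

lemma ofBits_zero : ofBits (0 : ι → ZMod 2) = 1 :=
  funext fun _ => by simp [ofBits, ofBit]

lemma ofBits_add (v w : ι → ZMod 2) : ofBits (v + w) = ofBits v * ofBits w :=
  funext fun j => ofBit_add (v j) (w j)

lemma signBits_ofBits (w : ι → ZMod 2) : signBits (ofBits w) = w :=
  funext fun j => signBit_ofBit (w j)

lemma ofBits_signBits_mul_normUnits (u : ι → ℝˣ) :
    ofBits (signBits u) * (fun j => normUnits (u j)) = u :=
  funext fun j => ofBit_signBit_mul_normUnits (u j)

lemma continuous_signBits : Continuous (signBits : (ι → ℝˣ) → ι → ZMod 2) :=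
  continuous_pi fun j => continuous_signBit.comp (continuous_apply j)

def signSubmodule (U : Subgroup (ι → ℝˣ)) : Submodule (ZMod 2) (ι → ZMod 2) :=
  AddSubgroup.toZModSubmodule 2
    { carrier := {w | ofBits w ∈ U}
      zero_mem' := by simp [ofBits_zero]
      add_mem' := fun hv hw => by simpa [ofBits_add] using U.mul_mem hv hw
      neg_mem' := fun {w} hw => by
        rwa [show -w = w from funext fun j => ZMod.neg_eq_self_mod_two (w j)] }

lemma mem_signSubmodule {U : Subgroup (ι → ℝˣ)} {w : ι → ZMod 2} :
    w ∈ signSubmodule U ↔ ofBits w ∈ U := Iff.rfl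

lemma Subgroup.mem_of_forall_pos (U : Subgroup (ι → ℝˣ)) [U.FiniteIndex] {u : ι → ℝˣ}
    (hu : ∀ j, 0 < (u j : ℝ)) : u ∈ U := by
  have hn : U.index ≠ 0 := Subgroup.FiniteIndex.index_ne_zero
  let v : ι → ℝˣ := fun j => Units.mk0 ((u j : ℝ) ^ (U.index⁻¹ : ℝ))
    (Real.rpow_pos_of_pos (hu j) _).ne'
  have hv : v ^ U.index = u :=
    funext fun j => Units.ext (by simp [v, Real.rpow_inv_natCast_pow (hu j).le hn])
  exact hv ▸ U.pow_index_mem v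

lemma signBits_mem_signSubmodule (U : Subgroup (ι → ℝˣ)) [U.FiniteIndex] {u : ι → ℝˣ}
    (hu : u ∈ U) : signBits u ∈ signSubmodule U := by
  rw [mem_signSubmodule, ← mul_inv_eq_of_eq_mul (ofBits_signBits_mul_normUnits u).symm]
  exact U.mul_mem hu (U.inv_mem (U.mem_of_forall_pos fun j => normUnits_pos (u j)))

def bitsHom (φ : (κ → ZMod 2) →ₗ[ZMod 2] (ι → ZMod 2)) : (κ → ℝˣ) →* (ι → ℝˣ) where
  toFun r := ofBits (φ (signBits r))
  map_one' := by simp [signBits_of_pos, ofBits_zero]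
  map_mul' r s := by simp [signBits_mul, ofBits_add]

lemma bitsHom_ofBits (φ : (κ → ZMod 2) →ₗ[ZMod 2] (ι → ZMod 2)) (w : κ → ZMod 2) :
    bitsHom φ (ofBits w) = ofBits (φ w) := by
  simp [bitsHom, signBits_ofBits]

lemma bitsHom_of_pos (φ : (κ → ZMod 2) →ₗ[ZMod 2] (ι → ZMod 2)) {r : κ → ℝˣ}
    (hr : ∀ i, 0 < (r i : ℝ)) : bitsHom φ r = 1 := by
  simp [bitsHom, signBits_of_pos hr, ofBits_zero]

lemma continuous_bitsHom [Finite κ] (φ : (κ → ZMod 2) →ₗ[ZMod 2] (ι → ZMod 2)) :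
    Continuous (bitsHom φ) :=
  (continuous_of_discreteTopology (f := fun w => ofBits (φ w))).comp continuous_signBits

end SignVectors

lemma Submodule.exists_linearMap_range_eq {K V : Type*} [DivisionRing K] [AddCommGroup V]
    [Module K V] [FiniteDimensional K V] (W : Submodule K V) {n : ℕ} (hn : finrank K W = n) :
    ∃ φ : (Fin n → K) →ₗ[K] V, LinearMap.range φ = W :=
  ⟨W.subtype ∘ₗ (finBasisOfFinrankEq K W hn).equivFun.symm.toLinearMap, by
    rw [LinearMap.range_comp, LinearEquiv.range, Submodule.map_top, Submodule.range_subtype]⟩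

section SignedNorm

variable {a e : ℕ}

def normAppendHom : (Fin e → ℂˣ) × (Fin (a - e) → ℝˣ) →* (Fin a → ℝˣ) where
  toFun p j :=
    if h : (j : ℕ) < e then normUnits (p.1 ⟨j, h⟩) else normUnits (p.2 ⟨j - e, by omega⟩)
  map_one' := by ext j : 1; simp
  map_mul' p q := by
    ext j : 1
    simp only [Prod.fst_mul, Prod.snd_mul, Pi.mul_apply]
    split_ifs <;> exact map_mul _ _ _

lemma normAppendHom_apply (p : (Fin e → ℂˣ) × (Fin (a - e) → ℝˣ)) (j : Fin a) :
    normAppendHom p j =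
      if h : (j : ℕ) < e then normUnits (p.1 ⟨j, h⟩) else normUnits (p.2 ⟨j - e, by omega⟩) :=
  rfl

lemma continuous_normAppendHom :
    Continuous (normAppendHom : (Fin e → ℂˣ) × (Fin (a - e) → ℝˣ) →* (Fin a → ℝˣ)) := by
  refine continuous_pi fun j => ?_
  simp only [normAppendHom_apply]
  split_ifs
  · exact continuous_normUnits.comp ((continuous_apply _).comp continuous_fst)
  · exact continuous_normUnits.comp ((continuous_apply _).comp continuous_snd)

lemma normAppendHom_pos (p : (Fin e → ℂˣ) × (Fin (a - e) → ℝˣ)) (j : Fin a) :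
    0 < (normAppendHom p j : ℝ) := by
  rw [normAppendHom_apply]
  split_ifs <;> exact normUnits_pos _

lemma normAppendHom_one_ofBits (w : Fin (a - e) → ZMod 2) :
    normAppendHom ((1 : Fin e → ℂˣ), ofBits w) = 1 := by
  ext j : 1
  simp [normAppendHom_apply, ofBits, normUnits_ofBit]

lemma exists_normAppendHom_eq (he : e ≤ a) {u : Fin a → ℝˣ} (hu : ∀ j, 0 < (u j : ℝ)) :
    ∃ p : (Fin e → ℂˣ) × (Fin (a - e) → ℝˣ), (∀ i, 0 < (p.2 i : ℝ)) ∧ normAppendHom p = u := by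
  refine ⟨(fun i => Units.map (algebraMap ℝ ℂ : ℝ →* ℂ) (u (Fin.castLE he i)),
    fun i => u ⟨e + i, by omega⟩), fun i => hu _, ?_⟩
  ext j : 1
  by_cases h : (j : ℕ) < e
  · simp [normAppendHom_apply, h, normUnits_map_ofReal (hu _)]
  · simp only [normAppendHom_apply, h, dite_false, normUnits_of_pos (hu _)]
    exact congrArg u (Fin.ext (Nat.add_sub_cancel' (not_lt.1 h)))

def signedNormHom (φ : (Fin (a - e) → ZMod 2) →ₗ[ZMod 2] (Fin a → ZMod 2)) :
    (Fin e → ℂˣ) × (Fin (a - e) → ℝˣ) →* (Fin a → ℝˣ) :=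
  (bitsHom φ).comp (MonoidHom.snd _ _) * normAppendHom

lemma continuous_signedNormHom (φ : (Fin (a - e) → ZMod 2) →ₗ[ZMod 2] (Fin a → ZMod 2)) :
    Continuous (signedNormHom φ) :=
  ((continuous_bitsHom φ).comp continuous_snd).mul continuous_normAppendHom

lemma range_signedNormHom (he : e ≤ a) (U : Subgroup (Fin a → ℝˣ)) [U.FiniteIndex]
    {φ : (Fin (a - e) → ZMod 2) →ₗ[ZMod 2] (Fin a → ZMod 2)}
    (hφ : LinearMap.range φ = signSubmodule U) : (signedNormHom φ).range = U := by
  refine le_antisymm ?_ fun u hu => ?_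
  · rintro _ ⟨p, rfl⟩
    refine U.mul_mem ?_ (U.mem_of_forall_pos (normAppendHom_pos p))
    exact mem_signSubmodule.1 (hφ ▸ LinearMap.mem_range_self φ _)
  · obtain ⟨w, hw⟩ : signBits u ∈ LinearMap.range φ := hφ ▸ signBits_mem_signSubmodule U hu
    obtain ⟨p, hp, hpu⟩ := exists_normAppendHom_eq he fun j => normUnits_pos (u j)
    rw [← ofBits_signBits_mul_normUnits u]
    refine mul_mem ⟨(1, ofBits w), ?_⟩ ⟨p, ?_⟩
    · simp [signedNormHom, bitsHom_ofBits, hw, normAppendHom_one_ofBits]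
    · simp [signedNormHom, bitsHom_of_pos φ hp, hpu]

end SignedNorm

theorem stmt8_general (a : ℕ) (U : Subgroup (Fin a → ℝˣ)) (hfin : U.FiniteIndex) :
    ∃ (e : ℕ) (f : ((Fin e → ℂˣ) × (Fin (a - e) → ℝˣ)) →* (Fin a → ℝˣ)),
      e ≤ a ∧ Continuous f ∧ Set.range f = (U : Set (Fin a → ℝˣ)) := by
  set d := finrank (ZMod 2) (signSubmodule U)
  have hd : d ≤ a := by simpa using (signSubmodule U).finrank_le
  obtain ⟨φ, hφ⟩ := (signSubmodule U).exists_linearMap_range_eq (n := a - (a - d)) (by omega)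
  refine ⟨a - d, signedNormHom φ, Nat.sub_le a d, continuous_signedNormHom φ, ?_⟩
  rw [← MonoidHom.coe_range, range_signedNormHom (Nat.sub_le a d) U hφ]

/-- Let `a ≥ 1` and let `U` be an open finite-index subgroup of `(ℝˣ)ᵃ`. Then
there exist `e ≤ a` and a continuous group homomorphism
`f : (ℂˣ)ᵉ × (ℝˣ)^(a-e) → (ℝˣ)ᵃ` whose image is exactly `U`. -/
theorem stmt8 (a : ℕ) (ha : 1 ≤ a) (U : Subgroup (Fin a → ℝˣ))
    (hopen : IsOpen (U : Set (Fin a → ℝˣ))) (hfin : U.FiniteIndex) :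
    ∃ (e : ℕ) (f : ((Fin e → ℂˣ) × (Fin (a - e) → ℝˣ)) →* (Fin a → ℝˣ)),
      e ≤ a ∧ Continuous f ∧ Set.range f = (U : Set (Fin a → ℝˣ)) :=
  stmt8_general a U hfin
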